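/- arXiv:2305.08086 — 5 statements merged into one kernel-verified Lean document; each statement's English description precedes it below -/
import Mathlib

section
/- A disconnected graph G on vertex set {1,...,n} is unpaired in V₁₂ (i.e., neither G nor G − {1,2} nor G + {1,2} forms a V₁₂-pair with G) if and only if G has exactly two connected components and the vertices 1 and 2 lie in different components. -/
/-- A finset of edges viewed as a simple graph on `Fin n`. -/
def graphOf {n : ℕ} (E : Finset (Sym2 (Fin n))) : SimpleGraph (Fin n) :=
  SimpleGraph.fromEdgeSet (E : Set (Sym2 (Fin n)))

/-- The simplices of the complex `N_n`: edge sets (of simple graphs, so no loops)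
whose graph is disconnected. -/
def memNn {n : ℕ} (E : Finset (Sym2 (Fin n))) : Prop :=
  (∀ e ∈ E, ¬ e.IsDiag) ∧ ¬ (graphOf E).Connected

/-- The discrete vector field `V₁₂`: pairs `(G, G + {1,2})` where `G` is disconnected,
does not contain the edge `{1,2}`, and `G + {1,2}` is disconnected.
(Vertices 1 and 2 are `⟨0,_⟩`, `⟨1,_⟩` in `Fin n`.) -/
def V12 (n : ℕ) (hn : 2 ≤ n) : Set (Finset (Sym2 (Fin n)) × Finset (Sym2 (Fin n))) :=
  {p | memNn p.1 ∧ s((⟨0, by omega⟩ : Fin n), (⟨1, by omega⟩ : Fin n)) ∉ p.1 ∧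
       p.2 = insert s((⟨0, by omega⟩ : Fin n), (⟨1, by omega⟩ : Fin n)) p.1 ∧
       memNn p.2}

/-- A `V`-path `α₀, β₀, α₁, …, α_k, β_k, α_{k+1}` recorded by its sequences of lower
and upper simplices. -/
def IsVPath {X : Type*} (V : Set (Finset X × Finset X)) (a b : ℕ → Finset X) (k : ℕ) : Prop :=
  ∀ i ≤ k, (a i, b i) ∈ V ∧ a (i + 1) ⊂ b i ∧ (a (i + 1)).card = (a i).card ∧ a (i + 1) ≠ a i

/-!
If `{1,2} ∈ G`, then `G` is paired with `G - {1,2}`, which is still disconnected; otherwise `G`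
is paired with `G + {1,2}` unless that graph is connected. So `G` is unpaired iff `G + {1,2}` is
connected, i.e. iff every vertex is reachable in `G` from `1` or from `2`. Since `G` itself is
disconnected, `1` and `2` then lie in different components, and these are the only two.
-/

namespace SimpleGraph

variable {V : Type*} {G : SimpleGraph V}

lemma Reachable.mem_of_adj_mem {S : Set V} (hS : ∀ a b, G.Adj a b → a ∈ S → b ∈ S) {a b : V}
    (h : G.Reachable a b) (ha : a ∈ S) : b ∈ S := by
  obtain ⟨w⟩ := h
  induction w with
  | nil => exact ha
  | cons hadj _ ih => exact ih (hS _ _ hadj ha)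

lemma connected_sup_edge_iff {u v : V} :
    (G ⊔ edge u v).Connected ↔ ∀ w, G.Reachable u w ∨ G.Reachable v w := by
  constructor
  · intro h w
    refine (h.preconnected u w).mem_of_adj_mem
      (S := {w | G.Reachable u w ∨ G.Reachable v w}) ?_ (.inl .rfl)
    rintro a b (hab | hab) ha
    · exact ha.imp (·.trans hab.reachable) (·.trans hab.reachable)
    · rcases ((edge_adj ..).1 hab).1 with ⟨rfl, rfl⟩ | ⟨rfl, rfl⟩
      exacts [.inr .rfl, .inl .rfl]
  · intro h
    have huv : (G ⊔ edge u v).Reachable u v := by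
      rcases eq_or_ne u v with rfl | hne
      · rfl
      · exact Adj.reachable (.inr ((edge_adj ..).2 ⟨.inl ⟨rfl, rfl⟩, hne⟩))
    refine (connected_iff_exists_forall_reachable _).2 ⟨u, fun w => ?_⟩
    rcases h w with h | h
    · exact h.mono le_sup_left
    · exact huv.trans (h.mono le_sup_left)

lemma card_connectedComponent_eq_two_iff {u v : V} (huv : ¬G.Reachable u v) :
    Nat.card G.ConnectedComponent = 2 ↔ ∀ w, G.Reachable u w ∨ G.Reachable v w := by
  rw [Nat.card_eq_two_iff' (G.connectedComponentMk u)]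
  constructor
  · rintro ⟨c, -, hc⟩ w
    by_cases hw : G.connectedComponentMk w = G.connectedComponentMk u
    · exact .inl (ConnectedComponent.exact hw.symm)
    · have hvc := hc _ fun h => huv (ConnectedComponent.exact h.symm)
      exact .inr (ConnectedComponent.exact (hvc.trans (hc _ hw).symm))
  · intro h
    refine ⟨G.connectedComponentMk v, fun h => huv (ConnectedComponent.exact h.symm), ?_⟩
    intro c hc
    induction c using ConnectedComponent.ind with | h w => ?_
    rcases h w with h | h
    · exact absurd (ConnectedComponent.sound h.symm) hc
    · exact ConnectedComponent.sound h.symm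

lemma connected_sup_edge_iff_of_not_connected (hG : ¬G.Connected) {u v : V} :
    (G ⊔ edge u v).Connected ↔
      Nat.card G.ConnectedComponent = 2 ∧ G.connectedComponentMk u ≠ G.connectedComponentMk v := by
  rw [connected_sup_edge_iff, Ne, ConnectedComponent.eq]
  constructor
  · intro h
    have huv : ¬G.Reachable u v := fun huv =>
      hG ((connected_iff_exists_forall_reachable _).2 ⟨u, fun w => (h w).elim id huv.trans⟩)
    exact ⟨(card_connectedComponent_eq_two_iff huv).2 h, huv⟩
  · rintro ⟨hcard, huv⟩
    exact (card_connectedComponent_eq_two_iff huv).1 hcard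

end SimpleGraph

open SimpleGraph

lemma graphOf_insert {n : ℕ} (E : Finset (Sym2 (Fin n))) (v w : Fin n) :
    graphOf (insert s(v, w) E) = graphOf E ⊔ edge v w := by
  rw [graphOf, graphOf, edge, Finset.coe_insert, Set.insert_eq, Set.union_comm, fromEdgeSet_union]

lemma memNn.mono {n : ℕ} {E F : Finset (Sym2 (Fin n))} (hF : memNn F) (h : E ⊆ F) : memNn E :=
  ⟨fun e he => hF.1 e (h he),
    fun hc => hF.2 (hc.mono (fromEdgeSet_mono (Finset.coe_subset.2 h)))⟩

lemma not_exists_mem_V12_iff {n : ℕ} (hn : 2 ≤ n) {E : Finset (Sym2 (Fin n))} (hE : memNn E) :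
    (¬ ∃ p ∈ V12 n hn, E = p.1 ∨ E = p.2) ↔
      (graphOf (insert s((⟨0, by omega⟩ : Fin n), (⟨1, by omega⟩ : Fin n)) E)).Connected := by
  set e : Sym2 (Fin n) := s((⟨0, by omega⟩ : Fin n), (⟨1, by omega⟩ : Fin n))
  by_cases he : e ∈ E
  · rw [Finset.insert_eq_of_mem he, iff_false_right hE.2, not_not]
    refine ⟨(E.erase e, E), ⟨hE.mono (Finset.erase_subset _ _), Finset.notMem_erase _ _,
      (Finset.insert_erase he).symm, hE⟩, .inr rfl⟩
  · constructor
    · intro hunpaired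
      by_contra hc
      have hloop : ¬e.IsDiag := by simp [e]
      exact hunpaired ⟨(E, insert e E), ⟨hE, he, rfl,
        ⟨(Finset.forall_mem_insert _ _ _).2 ⟨hloop, hE.1⟩, hc⟩⟩, .inl rfl⟩
    · rintro hc ⟨p, ⟨-, -, hp2, hp⟩, rfl | rfl⟩
      · exact hp.2 (hp2 ▸ hc)
      · exact he (hp2 ▸ Finset.mem_insert_self _ _)

/-- A disconnected graph `G` (given by its edge set `E`) is unpaired in `V₁₂`
iff `G` has exactly two connected components and the vertices 1 and 2 lie in different
components. -/
theorem stmt_4 (n : ℕ) (hn : 2 ≤ n) (E : Finset (Sym2 (Fin n))) (hE : memNn E) :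
    (¬ ∃ p ∈ V12 n hn, E = p.1 ∨ E = p.2) ↔
      (Nat.card (graphOf E).ConnectedComponent = 2 ∧
        (graphOf E).connectedComponentMk ⟨0, by omega⟩ ≠
          (graphOf E).connectedComponentMk ⟨1, by omega⟩) := by
  rw [not_exists_mem_V12_iff hn hE, graphOf_insert]
  exact connected_sup_edge_iff_of_not_connected hE.2
end

section
/- The discrete vector field V₁₂ on the complex of disconnected graphs admits no non-trivial closed V₁₂-path: if α₀, β₀, α₁ is a V₁₂-path (i.e., (α₀,β₀) ∈ V₁₂, α₁ ⊊ β₀, |α₁| = |α₀|, α₁ ≠ α₀), then α₁ is the head of an arrow in V₁₂ (i.e., α₁ = β for some pair (α,β) ∈ V₁₂), and hence (α₁, β) ∉ V₁₂ for any β, so no V₁₂-path can be continued past α₁; in particular V₁₂ is a gradient vector field. -/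
/-!
Every `V₁₂`-path `α₀, β₀, α₁` has `β₀ = α₀ + {1,2}`, and `α₁` is a facet of `β₀` of the size of
`α₀` other than `α₀`, so `α₁` must contain the edge `{1,2}`. Since `N_n` is closed under taking
subgraphs, `α₁ - {1,2}` is disconnected as well and `(α₁ - {1,2}, α₁)` is an arrow of `V₁₂`;
an arrow's tail never contains `{1,2}`, so no path continues past `α₁`. A closed path would
therefore have length one, i.e. `α₁ = α₀`, which is excluded.
-/

open Finset

theorem Finset.mem_of_ssubset_insert_of_card_eq {X : Type*} [DecidableEq X] {s t : Finset X}
    {x : X} (hts : t ⊂ insert x s) (hcard : t.card = s.card) (hne : t ≠ s) : x ∈ t := by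
  by_contra hx
  exact hne (eq_of_subset_of_card_le ((subset_insert_iff_of_notMem hx).mp hts.subset) hcard.ge)

theorem memNn_of_subset {n : ℕ} {A B : Finset (Sym2 (Fin n))} (hAB : A ⊆ B) (hB : memNn B) :
    memNn A :=
  ⟨fun e he => hB.1 e (hAB he), fun hA =>
    hB.2 (hA.mono (SimpleGraph.fromEdgeSet_mono (coe_subset.mpr hAB)))⟩

def edge12 (n : ℕ) (hn : 2 ≤ n) : Sym2 (Fin n) :=
  s((⟨0, by omega⟩ : Fin n), (⟨1, by omega⟩ : Fin n))

section V12

variable {n : ℕ} {hn : 2 ≤ n}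

theorem edge12_notMem_of_mem_V12 {α β : Finset (Sym2 (Fin n))} (h : (α, β) ∈ V12 n hn) :
    edge12 n hn ∉ α :=
  h.2.1

theorem erase_edge12_mem_V12 {β : Finset (Sym2 (Fin n))} (hβ : memNn β)
    (he : edge12 n hn ∈ β) : (β.erase (edge12 n hn), β) ∈ V12 n hn :=
  ⟨memNn_of_subset (erase_subset _ _) hβ, notMem_erase _ _, (insert_erase he).symm, hβ⟩

theorem edge12_mem_of_V12_path {α₀ β₀ α₁ : Finset (Sym2 (Fin n))} (h₀ : (α₀, β₀) ∈ V12 n hn)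
    (hsub : α₁ ⊂ β₀) (hcard : α₁.card = α₀.card) (hne : α₁ ≠ α₀) : edge12 n hn ∈ α₁ :=
  mem_of_ssubset_insert_of_card_eq (h₀.2.2.1 ▸ hsub) hcard hne

theorem V12_path_head_is_arrow_head {α₀ β₀ α₁ : Finset (Sym2 (Fin n))}
    (h₀ : (α₀, β₀) ∈ V12 n hn) (hsub : α₁ ⊂ β₀) (hcard : α₁.card = α₀.card) (hne : α₁ ≠ α₀) :
    (∃ α, (α, α₁) ∈ V12 n hn) ∧ ∀ β, (α₁, β) ∉ V12 n hn := by
  have he := edge12_mem_of_V12_path h₀ hsub hcard hne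
  have hmα₁ : memNn α₁ := memNn_of_subset hsub.subset h₀.2.2.2
  exact ⟨⟨_, erase_edge12_mem_V12 hmα₁ he⟩, fun β hβ => edge12_notMem_of_mem_V12 hβ he⟩

theorem IsVPath.V12_last_ne_first {a b : ℕ → Finset (Sym2 (Fin n))} {k : ℕ}
    (hpath : IsVPath (V12 n hn) a b k) : a (k + 1) ≠ a 0 := by
  cases k with
  | zero => exact (hpath 0 le_rfl).2.2.2
  | succ m =>
    obtain ⟨h₀, hsub, hcard, hne⟩ := hpath 0 (Nat.zero_le _)
    exact ((V12_path_head_is_arrow_head h₀ hsub hcard hne).2 (b 1) (hpath 1 (by omega)).1).elim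

end V12

/-- In any `V₁₂`-path `α₀, β₀, α₁`, the simplex `α₁` is the head of an arrow in
`V₁₂`, hence is the tail of no arrow, so no `V₁₂`-path continues past `α₁`; in particular
`V₁₂` admits no non-trivial closed path, i.e. it is a gradient vector field. -/
theorem stmt_5 (n : ℕ) (hn : 3 ≤ n) :
    (∀ α₀ β₀ α₁ : Finset (Sym2 (Fin n)), (α₀, β₀) ∈ V12 n (by omega) → α₁ ⊂ β₀ →
      α₁.card = α₀.card → α₁ ≠ α₀ →
      (∃ α, (α, α₁) ∈ V12 n (by omega)) ∧ ∀ β, (α₁, β) ∉ V12 n (by omega)) ∧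
    (∀ (a b : ℕ → Finset (Sym2 (Fin n))) (k : ℕ),
      IsVPath (V12 n (by omega)) a b k → a (k + 1) ≠ a 0) :=
  ⟨fun _ _ _ => V12_path_head_is_arrow_head, fun _ _ _ => IsVPath.V12_last_ne_first⟩
end

section
/- Let V be a discrete vector field on a simplicial complex and γ: α₀, β₀, α₁, ..., αₖ, βₖ, α_{k+1} a V-path with β₀ = α₀ ∪ {x} where x ∉ α₀, and α₁ = β₀ \ {y} where y ∈ α₀. If γ is closed (α_{k+1} = α₀), then there exists an index i ∈ {2,...,k} with x ∉ αᵢ. -/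
/-!
Suppose `x ∈ αᵢ` for every `2 ≤ i ≤ k`. The first step already gives `x ∈ α₁`, since `α₁` is a
facet of `β₀ = α₀ ∪ {x}` different from `α₀`; hence `x ∈ α_k`. Then `β_k` contains both `x` and
`α_{k+1} = α₀`, so by cardinality `β_k = β₀`. A simplex lies in at most one pair of `V`, so
`α_k = α₀`, contradicting `x ∈ α_k` and `x ∉ α₀`.
-/

/-- `K` is an abstract simplicial complex (a collection of finite sets closed under
taking subsets). -/
def IsComplex {X : Type*} (K : Set (Finset X)) : Prop :=
  ∀ σ ∈ K, ∀ τ ⊆ σ, τ ∈ K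

/-- `V` is a discrete vector field on the complex `K`: a set of pairs `(α, β)` of simplices
with `α ⊊ β`, `|β| = |α| + 1`, such that each simplex occurs in at most one pair. -/
def IsDVF {X : Type*} (K : Set (Finset X)) (V : Set (Finset X × Finset X)) : Prop :=
  (∀ p ∈ V, p.1 ∈ K ∧ p.2 ∈ K ∧ p.1 ⊂ p.2 ∧ p.2.card = p.1.card + 1) ∧
  (∀ p ∈ V, ∀ q ∈ V, ∀ σ : Finset X, (σ = p.1 ∨ σ = p.2) → (σ = q.1 ∨ σ = q.2) → p = q)

theorem Finset.mem_of_subset_insert_of_card_eq {X : Type*} [DecidableEq X] {s t : Finset X}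
    {x : X} (hts : t ⊆ insert x s) (hcard : t.card = s.card) (hne : t ≠ s) : x ∈ t := by
  by_contra hxt
  exact hne (Finset.eq_of_subset_of_card_le ((Finset.subset_insert_iff_of_notMem hxt).mp hts)
    hcard.ge)

theorem Finset.insert_eq_of_subset_of_card_le {X : Type*} [DecidableEq X]
    {s t : Finset X} {x : X} (hst : insert x s ⊆ t) (hx : x ∉ s) (hcard : t.card ≤ s.card + 1) :
    insert x s = t :=
  Finset.eq_of_subset_of_card_le hst (by rwa [Finset.card_insert_of_notMem hx])

namespace IsDVF

variable {X : Type*} {K : Set (Finset X)} {V : Set (Finset X × Finset X)}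

theorem fst_ssubset_snd (hV : IsDVF K V) {α β : Finset X} (h : (α, β) ∈ V) : α ⊂ β :=
  (hV.1 _ h).2.2.1

theorem card_snd (hV : IsDVF K V) {α β : Finset X} (h : (α, β) ∈ V) :
    β.card = α.card + 1 :=
  (hV.1 _ h).2.2.2

theorem fst_eq_of_snd_eq (hV : IsDVF K V) {α α' β : Finset X} (h : (α, β) ∈ V)
    (h' : (α', β) ∈ V) : α = α' :=
  congrArg Prod.fst (hV.2 _ h _ h' β (Or.inr rfl) (Or.inr rfl))

end IsDVF

theorem stmt_6_general {X : Type*} [DecidableEq X] (K : Set (Finset X))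
    (V : Set (Finset X × Finset X)) (hV : IsDVF K V)
    (a b : ℕ → Finset X) (k : ℕ) (hpath : IsVPath V a b k)
    (x : X) (hx : x ∉ a 0) (hb0 : b 0 = insert x (a 0))
    (hclosed : a (k + 1) = a 0) :
    ∃ i, 2 ≤ i ∧ i ≤ k ∧ x ∉ a i := by
  by_contra! hmem
  obtain ⟨hV0, hsub0, hcard0, hne0⟩ := hpath 0 k.zero_le
  have hx1 : x ∈ a 1 :=
    Finset.mem_of_subset_insert_of_card_eq (hb0 ▸ hsub0.subset) hcard0 hne0
  have hk : 1 ≤ k := Nat.one_le_iff_ne_zero.mpr fun hk0 => hne0 (hk0 ▸ hclosed)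
  have hxk : x ∈ a k := by
    rcases hk.eq_or_lt with rfl | hk2
    · exact hx1
    · exact hmem k hk2 le_rfl
  obtain ⟨hVk, hsubk, hcardk, -⟩ := hpath k le_rfl
  have hbk : b 0 = b k := hb0.trans <|
    Finset.insert_eq_of_subset_of_card_le
      (Finset.insert_subset ((hV.fst_ssubset_snd hVk).subset hxk) (hclosed ▸ hsubk.subset)) hx
      (by rw [hV.card_snd hVk, ← hclosed, hcardk])
  have hak : a k = a 0 := hV.fst_eq_of_snd_eq hVk (hbk ▸ hV0)
  exact hx (hak ▸ hxk)

/-- if a `V`-path with `β₀ = α₀ ∪ {x}` (`x ∉ α₀`) and `α₁ = β₀ \ {y}` (`y ∈ α₀`)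
is closed, then some index `i ∈ {2, …, k}` satisfies `x ∉ αᵢ`. -/
theorem stmt_6 {X : Type*} [DecidableEq X] (K : Set (Finset X)) (hK : IsComplex K)
    (V : Set (Finset X × Finset X)) (hV : IsDVF K V)
    (a b : ℕ → Finset X) (k : ℕ) (hpath : IsVPath V a b k)
    (x y : X) (hx : x ∉ a 0) (hb0 : b 0 = insert x (a 0))
    (hy : y ∈ a 0) (ha1 : a 1 = (b 0).erase y)
    (hclosed : a (k + 1) = a 0) :
    ∃ i, 2 ≤ i ∧ i ≤ k ∧ x ∉ a i :=
  stmt_6_general K V hV a b k hpath x hx hb0 hclosed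
end

section
/- Let V be a discrete vector field on a simplicial complex, and let f: simplices → ℕ be a function such that for every V-path segment α, β, α' (with (α,β) ∈ V, α' ⊊ β, |α'| = |α|, α' ≠ α) either α' is the head of an arrow of V or f(α') < f(α). Then V has no non-trivial closed V-path. -/
/-!
Along a closed `V`-path every lower simplex `αᵢ₊₁` is also the tail of the next arrow
`(αᵢ₊₁, βᵢ₊₁)` (indices taken cyclically), so it cannot be the head of an arrow. The hypothesis
on `f` then forces `f` to strictly decrease along the whole path, which is impossible once the
path returns to `α₀`.
-/

section

variable {X : Type*} {K : Set (Finset X)} {V : Set (Finset X × Finset X)}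

theorem IsDVF.not_head_of_tail (hV : IsDVF K V) {α β τ : Finset X} (hα : (α, β) ∈ V) :
    (τ, α) ∉ V := by
  intro hτ
  have hτα : τ ⊂ α := (hV.1 _ hτ).2.2.1
  have hτ_eq : τ = α := congrArg Prod.fst (hV.2 _ hτ _ hα α (Or.inr rfl) (Or.inl rfl))
  exact hτα.ne hτ_eq

theorem IsVPath.exists_tail_of_closed {a b : ℕ → Finset X} {k : ℕ} (hpath : IsVPath V a b k)
    (hclosed : a (k + 1) = a 0) : ∀ i ≤ k, ∃ β, (a (i + 1), β) ∈ V := by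
  intro i hi
  rcases hi.lt_or_eq with hlt | rfl
  · exact ⟨b (i + 1), (hpath (i + 1) hlt).1⟩
  · exact ⟨b 0, hclosed ▸ (hpath 0 i.zero_le).1⟩

end

theorem stmt_17_general {X : Type*} (K : Set (Finset X))
    (V : Set (Finset X × Finset X)) (hV : IsDVF K V)
    (f : Finset X → ℕ)
    (h : ∀ α β α' : Finset X, (α, β) ∈ V → α' ⊂ β → α'.card = α.card → α' ≠ α →
      (∃ τ, (τ, α') ∈ V) ∨ f α' < f α) :
    ∀ (a b : ℕ → Finset X) (k : ℕ), IsVPath V a b k → a (k + 1) ≠ a 0 := by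
  intro a b k hpath hclosed
  have hstep : ∀ i ≤ k, f (a (i + 1)) < f (a i) := by
    intro i hi
    obtain ⟨harrow, hsub, hcard, hne⟩ := hpath i hi
    obtain ⟨β, htail⟩ := hpath.exists_tail_of_closed hclosed i hi
    exact (h _ _ _ harrow hsub hcard hne).resolve_left
      fun ⟨_, hhead⟩ ↦ hV.not_head_of_tail htail hhead
  have hanti : StrictAntiOn (f ∘ a) (Set.Iic (k + 1)) :=
    strictAntiOn_Iic_of_succ_lt fun m hm ↦ hstep m (Nat.lt_succ_iff.mp hm)
  have hlt : f (a (k + 1)) < f (a 0) :=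
    hanti (Nat.zero_le _) Set.self_mem_Iic (Nat.succ_pos k)
  exact hlt.ne (congrArg f hclosed)

/-- if `f` is a function on simplices such that along every `V`-path segment
`α, β, α'` either `α'` is the head of an arrow of `V` or `f α' < f α`, then `V` has no
non-trivial closed `V`-path. -/
theorem stmt_17 {X : Type*} (K : Set (Finset X)) (hK : IsComplex K)
    (V : Set (Finset X × Finset X)) (hV : IsDVF K V)
    (f : Finset X → ℕ)
    (h : ∀ α β α' : Finset X, (α, β) ∈ V → α' ⊂ β → α'.card = α.card → α' ≠ α →
      (∃ τ, (τ, α') ∈ V) ∨ f α' < f α) :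
    ∀ (a b : ℕ → Finset X) (k : ℕ), IsVPath V a b k → a (k + 1) ≠ a 0 :=
  stmt_17_general K V hV f h
end

section
/- The number of trees on a linearly ordered vertex set of size m + 1 that are increasing (labels strictly increase along every path from the minimum vertex) equals m!. -/
/-!
An increasing tree rooted at `r` amounts to a choice of a parent `u < v` for every vertex
`v ≠ r`. In an increasing tree the parent of `v` is the penultimate vertex of the path from `r`,
and by uniqueness of paths it is the only smaller neighbour of `v`. Conversely, in the graph
joining each `v ≠ r` to its parent, no vertex has two smaller neighbours, so a cycle cannot
pass through its largest vertex, and a path starting at `r`, which has no smaller neighbour,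
can never turn downwards; by well-foundedness every vertex descends to `r`. On `Fin (m + 1)`
with root `0` the vertex `v` has `v` possible parents, which gives `1 * 2 * ⋯ * m = m!` trees.
-/

open Nat

abbrev ParentMap {α : Type*} [LinearOrder α] (r : α) : Type _ :=
  ∀ v : {v // v ≠ r}, {u // u < v.1}

namespace SimpleGraph

variable {α : Type*} [LinearOrder α] {G : SimpleGraph α} {r u v : α}

theorem Walk.start_le_of_isChain_support {x : α} (p : G.Walk u v)
    (hp : p.support.IsChain (· < ·)) (hx : x ∈ p.support) : u ≤ x := by
  rw [← p.cons_tail_support] at hp hx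
  rcases List.mem_cons.1 hx with rfl | hx
  · exact le_rfl
  · exact (hp.rel_cons hx).le

theorem Walk.le_end_of_isChain_support {x : α} (p : G.Walk u v)
    (hp : p.support.IsChain (· < ·)) (hx : x ∈ p.support) : x ≤ v := by
  rw [← p.dropLast_support_concat] at hp hx
  rw [List.isChain_iff_pairwise, List.pairwise_append] at hp
  rcases List.mem_append.1 hx with hx | hx
  · exact (hp.2.2 x hx v (List.mem_singleton_self v)).le
  · exact (List.mem_singleton.1 hx).le

def LowerNeighborUnique (G : SimpleGraph α) : Prop :=
  ∀ ⦃u u' v⦄, G.Adj u v → G.Adj u' v → u < v → u' < v → u = u'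

theorem LowerNeighborUnique.isAcyclic (hG : G.LowerNeighborUnique) : G.IsAcyclic := by
  intro v c hc
  obtain ⟨w, hw, hmax⟩ := c.support.toFinset.exists_max_image id ⟨v, by simp⟩
  rw [List.mem_toFinset] at hw
  have hc' := hc.rotate hw
  set c' := c.rotate w hw
  have hle : ∀ x ∈ c'.support, x ≤ w := fun x hx =>
    hmax x (List.mem_toFinset.2 ((c.mem_support_rotate_iff w hw).1 hx))
  have hsnd := c'.adj_snd hc'.not_nil
  have hpen := c'.adj_penultimate hc'.not_nil
  exact hc'.snd_ne_penultimate <| hG hsnd.symm hpen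
    ((hle _ (c'.getVert_mem_support _)).lt_of_ne hsnd.ne.symm)
    ((hle _ (c'.getVert_mem_support _)).lt_of_ne hpen.ne)

theorem LowerNeighborUnique.isChain_support (hG : G.LowerNeighborUnique)
    (p : G.Walk u v) (hp : p.IsPath) (hu : ∀ w ∈ p.support, G.Adj w u → ¬w < u) :
    p.support.IsChain (· < ·) := by
  induction p with
  | nil => exact List.isChain_singleton _
  | @cons a x b h q ih =>
    rw [Walk.cons_isPath_iff] at hp
    have hax : a < x := lt_of_not_ge fun hxa =>
      hu x (by simp) h.symm (hxa.lt_of_ne h.ne.symm)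
    have hq := ih hp.1 fun w hw hwx hwlt => hp.2 (hG hwx h hwlt hax ▸ hw)
    rw [← q.cons_tail_support] at hq
    rw [Walk.support_cons, ← q.cons_tail_support]
    exact hq.cons_cons hax

def IsIncreasingTree (G : SimpleGraph α) (r : α) : Prop :=
  G.IsTree ∧ ∀ (v : α) (p : G.Walk r v), p.IsPath → p.support.IsChain (· < ·)

def ofParentMap (p : ParentMap r) : SimpleGraph α :=
  fromRel fun u v => ∃ hv : v ≠ r, u = p ⟨v, hv⟩

theorem ofParentMap_adj_parent (p : ParentMap r) (v : {v // v ≠ r}) :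
    (ofParentMap p).Adj (p v) v :=
  (fromRel_adj ..).2 ⟨(p v).2.ne, Or.inl ⟨v.2, rfl⟩⟩

theorem eq_parent_of_ofParentMap_adj_of_lt {p : ParentMap r} (h : (ofParentMap p).Adj u v)
    (huv : u < v) : ∃ hv : v ≠ r, u = p ⟨v, hv⟩ := by
  obtain ⟨-, h | ⟨hu, rfl⟩⟩ := (fromRel_adj ..).1 h
  · exact h
  · exact absurd ((p ⟨u, hu⟩).2.trans huv) (lt_irrefl _)

theorem lowerNeighborUnique_ofParentMap (p : ParentMap r) :
    (ofParentMap p).LowerNeighborUnique := fun _ _ _ h h' hu hu' => by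
  obtain ⟨hv, rfl⟩ := eq_parent_of_ofParentMap_adj_of_lt h hu
  obtain ⟨_, rfl⟩ := eq_parent_of_ofParentMap_adj_of_lt h' hu'
  rfl

theorem reachable_ofParentMap [WellFoundedLT α] (p : ParentMap r) (v : α) :
    (ofParentMap p).Reachable r v := by
  induction v using WellFoundedLT.induction with
  | _ v ih =>
    by_cases hv : v = r
    · subst hv
      rfl
    · exact (ih _ (p ⟨v, hv⟩).2).trans (ofParentMap_adj_parent p ⟨v, hv⟩).reachable

theorem isIncreasingTree_ofParentMap [WellFoundedLT α] (p : ParentMap r) :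
    (ofParentMap p).IsIncreasingTree r := by
  refine ⟨⟨(connected_iff_exists_forall_reachable _).2 ⟨r, reachable_ofParentMap p⟩,
    (lowerNeighborUnique_ofParentMap p).isAcyclic⟩, fun v q hq => ?_⟩
  refine (lowerNeighborUnique_ofParentMap p).isChain_support q hq fun w _ hw hlt => ?_
  exact (eq_parent_of_ofParentMap_adj_of_lt hw hlt).1 rfl

theorem ofParentMap_injective : Function.Injective (ofParentMap (r := r)) := by
  intro p q h
  funext v
  apply Subtype.ext
  exact (eq_parent_of_ofParentMap_adj_of_lt (h ▸ ofParentMap_adj_parent p v) (p v).2).2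

namespace IsIncreasingTree

theorem exists_path (hG : G.IsIncreasingTree r) (v : α) :
    ∃ q : G.Walk r v, q.IsPath ∧ q.support.IsChain (· < ·) := by
  obtain ⟨q, hq, -⟩ := hG.1.existsUnique_path r v
  exact ⟨q, hq, hG.2 v q hq⟩

theorem root_le (hG : G.IsIncreasingTree r) (v : α) : r ≤ v := by
  obtain ⟨q, -, hq⟩ := hG.exists_path v
  exact q.start_le_of_isChain_support hq q.end_mem_support

theorem exists_lt_adj (hG : G.IsIncreasingTree r) (hv : v ≠ r) : ∃ u < v, G.Adj u v := by
  obtain ⟨q, -, hq⟩ := hG.exists_path v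
  have hadj := q.adj_penultimate fun h => hv h.eq.symm
  exact ⟨_, (q.le_end_of_isChain_support hq (q.getVert_mem_support _)).lt_of_ne hadj.ne, hadj⟩

theorem lowerNeighborUnique (hG : G.IsIncreasingTree r) : G.LowerNeighborUnique := by
  have path_through : ∀ {u v}, G.Adj u v → u < v →
      ∃ q : G.Walk r v, q.IsPath ∧ q.penultimate = u := by
    intro u v huv hlt
    obtain ⟨q, hq, hch⟩ := hG.exists_path u
    refine ⟨q.concat huv, hq.concat (fun hv => ?_) huv, q.penultimate_concat huv⟩
    exact (q.le_end_of_isChain_support hch hv).not_gt hlt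
  intro u u' v h h' hu hu'
  obtain ⟨q, hq, rfl⟩ := path_through h hu
  obtain ⟨q', hq', rfl⟩ := path_through h' hu'
  rw [(hG.1.existsUnique_path r v).unique hq hq']

theorem exists_ofParentMap_eq (hG : G.IsIncreasingTree r) :
    ∃ p : ParentMap r, ofParentMap p = G := by
  choose f hf using fun v : {v // v ≠ r} => hG.exists_lt_adj v.2
  refine ⟨fun v => ⟨f v, (hf v).1⟩, ?_⟩
  have eq_parent : ∀ {u v}, G.Adj u v → u < v → ∃ hv : v ≠ r, u = f ⟨v, hv⟩ :=
    fun {u v} h huv =>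
      have hv : v ≠ r := ((hG.root_le u).trans_lt huv).ne'
      ⟨hv, hG.lowerNeighborUnique h (hf ⟨v, hv⟩).2 huv (hf _).1⟩
  ext u v
  rw [ofParentMap, fromRel_adj]
  constructor
  · rintro ⟨-, ⟨hv, rfl⟩ | ⟨hu, rfl⟩⟩
    exacts [(hf ⟨v, hv⟩).2, (hf ⟨u, hu⟩).2.symm]
  · intro h
    exact ⟨h.ne, h.ne.lt_or_gt.imp (eq_parent h) (eq_parent h.symm)⟩

end IsIncreasingTree

theorem card_isIncreasingTree [Fintype α] (r : α) :
    Nat.card {G : SimpleGraph α // G.IsIncreasingTree r} =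
      ∏ v : {v // v ≠ r}, Nat.card {u // u < v.1} := by
  rw [← Nat.card_pi]
  refine (Nat.card_eq_of_bijective (fun p => ⟨ofParentMap p, isIncreasingTree_ofParentMap p⟩)
    ⟨fun p q h => ofParentMap_injective (congrArg Subtype.val h), ?_⟩).symm
  rintro ⟨G, hG⟩
  obtain ⟨p, rfl⟩ := hG.exists_ofParentMap_eq
  exact ⟨p, rfl⟩

end SimpleGraph

theorem Fin.natCard_subtype_lt {n : ℕ} (v : Fin n) : Nat.card {u // u < v} = v := by
  rw [← Fin.card_Iio, ← Nat.card_eq_finsetCard]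
  simp only [Finset.mem_Iio]

theorem Fin.prod_ne_zero_natCard_subtype_lt (m : ℕ) :
    ∏ v : {v : Fin (m + 1) // v ≠ 0}, Nat.card {u // u < v.1} = m ! := by
  rw [← (finSuccAboveEquiv 0).prod_comp]
  simp only [finSuccAboveEquiv_apply, Fin.succAbove_zero, Fin.natCard_subtype_lt, Fin.val_succ]
  rw [Fin.prod_univ_eq_prod_range (· + 1), Finset.prod_range_add_one_eq_factorial]

/-- the number of trees on a linearly ordered vertex set of size `m + 1`
(modelled by `Fin (m+1)`) that are increasing — labels strictly increase along every path
from the minimum vertex — equals `m!`. -/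
theorem stmt_19 (m : ℕ) :
    Nat.card {G : SimpleGraph (Fin (m + 1)) //
      G.IsTree ∧ ∀ (v : Fin (m + 1)) (p : G.Walk 0 v), p.IsPath →
        List.Chain' (· < ·) p.support} = Nat.factorial m :=
  (SimpleGraph.card_isIncreasingTree 0).trans (Fin.prod_ne_zero_natCard_subtype_lt m)
end
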